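/- There exist no three-player impartial games X and Y such that X and Y are both Q-games and X + Y is an N-game or a P-game. -/

import Mathlib

/-- Three-player impartial games: well-founded game trees. -/
inductive G3 : Type 1 where
  | mk : (ι : Type) → (ι → G3) → G3

namespace G3

/-- The index type of options (moves) of a game. -/
def moves : G3 → Type
  | mk ι _ => ι

/-- The option of a game corresponding to a move. -/
def moveFn : (g : G3) → moves g → G3
  | mk _ f => f

/-- Disjunctive sum: move in exactly one component. -/
noncomputable def add : G3 → G3 → G3 :=
  G3.rec (fun ι f ihf =>
    G3.rec (fun κ g ihg =>
      mk (ι ⊕ κ) (fun x =>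
        match x with
        | Sum.inl i => ihf i (mk κ g)
        | Sum.inr j => ihg j)))

/-- The four outcome types of a three-player impartial game. -/
inductive PType : Type
  | N | O | P | Q
deriving DecidableEq

open Classical in
/-- The type of a game: `N` iff some option is a `P`-game; `O` iff it has at least
one option and all options are `N`-games; `P` iff all options are `O`-games;
`Q` otherwise. -/
noncomputable def typ : G3 → PType
  | mk ι f =>
    if ∃ i, typ (f i) = PType.P then PType.N
    else if Nonempty ι ∧ ∀ i, typ (f i) = PType.N then PType.O
    else if ∀ i, typ (f i) = PType.O then PType.P
    else PType.Q

/-- The Nim heap of size `n`: options are heaps of sizes `0, …, n-1`. -/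
def nim : ℕ → G3
  | n => mk (Fin n) (fun i => nim i)
termination_by n => n
decreasing_by exact i.isLt

/-- The sum of `n` Nim heaps of size 1. -/
noncomputable def ones : ℕ → G3
  | 0 => nim 0
  | n + 1 => add (ones n) (nim 1)

/-!
A sum with a Q-summand is never a P-game, and a sum of two Q-games is never an N-game; the two
claims are proved together by induction on both summands. An N-option of a Q + Q sum would be a
P-game with a Q-summand. Conversely, suppose `A` is Q and `A + B` is P, so that every option of
`A + B` is O. A separate induction gives rules such as: if `A` is P and `A + B` is O then `B` is
O; if `A` is N and `A + B` is O then `B` is N. They force every option of `B` to be O or Q, and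
an option `A'` of `A` that is not O to be Q. As `A' + B` is O, `B` is not P, so it has a
Q-option `B'`, and `A' + B'` is an N-option of `A' + B` that is a Q + Q sum.
-/

open PType

lemma add_mk (ι κ : Type) (f : ι → G3) (g : κ → G3) :
    add (mk ι f) (mk κ g) =
      mk (ι ⊕ κ) (Sum.elim (fun i => add (f i) (mk κ g)) (fun j => add (mk ι f) (g j))) :=
  congrArg (mk _) (funext fun x => by cases x <;> rfl)

section Typ

variable {ι κ : Type} {f : ι → G3} {g : κ → G3}

open Classical in
lemma typ_mk :
    typ (mk ι f) =
      if ∃ i, typ (f i) = P then N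
      else if Nonempty ι ∧ ∀ i, typ (f i) = N then O
      else if ∀ i, typ (f i) = O then P
      else Q := by
  rw [typ]

lemma typ_mk_eq_N_iff : typ (mk ι f) = N ↔ ∃ i, typ (f i) = P := by
  rw [typ_mk]; split_ifs <;> grind

lemma typ_mk_eq_O_iff : typ (mk ι f) = O ↔ Nonempty ι ∧ ∀ i, typ (f i) = N := by
  rw [typ_mk]; split_ifs <;> grind

lemma typ_mk_eq_P_iff : typ (mk ι f) = P ↔ ∀ i, typ (f i) = O := by
  rw [typ_mk]
  split_ifs with _ hN
  · grind
  · obtain ⟨⟨i⟩, hN⟩ := hN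
    exact iff_of_false (by simp) fun hO => by simpa [hN i] using hO i
  all_goals grind

open Classical in
lemma typ_mk_congr (h : Set.range (typ ∘ f) = Set.range (typ ∘ g)) :
    typ (mk ι f) = typ (mk κ g) := by
  have hmem : ∀ t, (∃ i, typ (f i) = t) ↔ ∃ j, typ (g j) = t := fun t => by
    simpa using congrArg (t ∈ ·) h
  have hall : ∀ t, (∀ i, typ (f i) = t) ↔ ∀ j, typ (g j) = t := fun t => by
    simpa [Set.range_subset_singleton] using congrArg (· ⊆ {t}) h
  have hne : Nonempty ι ↔ Nonempty κ := by
    simpa [Set.range_nonempty_iff_nonempty] using congrArg Set.Nonempty h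
  rw [typ_mk, typ_mk]
  exact if_congr (hmem P) rfl <| if_congr (and_congr hne (hall N)) rfl <| if_congr (hall O) rfl rfl

lemma typ_add_mk_eq_N_iff :
    typ (add (mk ι f) (mk κ g)) = N ↔
      (∃ i, typ (add (f i) (mk κ g)) = P) ∨ ∃ j, typ (add (mk ι f) (g j)) = P := by
  simp only [add_mk, typ_mk_eq_N_iff, Sum.exists, Sum.elim_inl, Sum.elim_inr]

lemma typ_add_mk_eq_O_iff :
    typ (add (mk ι f) (mk κ g)) = O ↔ (Nonempty ι ∨ Nonempty κ) ∧
      (∀ i, typ (add (f i) (mk κ g)) = N) ∧ ∀ j, typ (add (mk ι f) (g j)) = N := by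
  simp only [add_mk, typ_mk_eq_O_iff, nonempty_sum, Sum.forall, Sum.elim_inl, Sum.elim_inr]

lemma typ_add_mk_eq_P_iff :
    typ (add (mk ι f) (mk κ g)) = P ↔
      (∀ i, typ (add (f i) (mk κ g)) = O) ∧ ∀ j, typ (add (mk ι f) (g j)) = O := by
  simp only [add_mk, typ_mk_eq_P_iff, Sum.forall, Sum.elim_inl, Sum.elim_inr]

lemma typ_add_of_isEmpty [IsEmpty κ] (A : G3) : typ (add A (mk κ g)) = typ A := by
  induction A with
  | mk ι f ih =>
    rw [add_mk]
    refine typ_mk_congr (Set.ext fun t => ?_)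
    simp [Sum.exists, ih]

lemma typ_add_eq_N_of_typ_add_mk_eq_O {A : G3} (h : typ (add A (mk κ g)) = O) (j : κ) :
    typ (add A (g j)) = N := by
  cases A
  exact (typ_add_mk_eq_O_iff.mp h).2.2 j

end Typ

lemma typ_add_comm (A B : G3) : typ (add A B) = typ (add B A) := by
  induction A generalizing B with
  | mk ι f ihA =>
    induction B with
    | mk κ g ihB =>
      rw [add_mk, add_mk]
      refine typ_mk_congr (Set.ext fun t => ?_)
      simp only [Set.mem_range, Function.comp_apply, Sum.exists, Sum.elim_inl, Sum.elim_inr,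
        ihA, ihB]
      exact or_comm

structure AddRules (A B : G3) : Prop where
  N_of_N_of_add_O : typ A = N → typ (add A B) = O → typ B = N
  O_of_P_of_add_O : typ A = P → typ (add A B) = O → typ B = O
  P_of_P_of_add_P : typ A = P → typ (add A B) = P → typ B = P
  N_of_P_of_add_N : typ A = P → typ (add A B) = N → typ B = N
  N_of_O_of_add_P : typ A = O → typ (add A B) = P → typ B = N

theorem addRules (A B : G3) : AddRules A B := by
  induction A generalizing B with
  | mk ι f ihA =>
    induction B with
    | mk κ g ihB =>
      constructor
      case N_of_N_of_add_O =>
        intro hA hO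
        obtain ⟨i, hi⟩ := typ_mk_eq_N_iff.mp hA
        exact (ihA i _).N_of_P_of_add_N hi ((typ_add_mk_eq_O_iff.mp hO).2.1 i)
      case O_of_P_of_add_O =>
        intro hA hO
        rcases isEmpty_or_nonempty κ with hκ | hκ
        · rw [typ_add_of_isEmpty, hA] at hO
          cases hO
        · exact typ_mk_eq_O_iff.mpr ⟨hκ, fun j =>
            (ihB j).N_of_P_of_add_N hA ((typ_add_mk_eq_O_iff.mp hO).2.2 j)⟩
      case P_of_P_of_add_P =>
        intro hA hP
        exact typ_mk_eq_P_iff.mpr fun j =>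
          (ihB j).O_of_P_of_add_O hA ((typ_add_mk_eq_P_iff.mp hP).2 j)
      case N_of_P_of_add_N =>
        intro hA hN
        rcases typ_add_mk_eq_N_iff.mp hN with ⟨i, hi⟩ | ⟨j, hj⟩
        · exact (ihA i _).N_of_O_of_add_P (typ_mk_eq_P_iff.mp hA i) hi
        · exact typ_mk_eq_N_iff.mpr ⟨j, (ihB j).P_of_P_of_add_P hA hj⟩
      case N_of_O_of_add_P =>
        intro hA hP
        obtain ⟨⟨i⟩, hN⟩ := typ_mk_eq_O_iff.mp hA
        exact (ihA i _).N_of_N_of_add_O (hN i) ((typ_add_mk_eq_P_iff.mp hP).1 i)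

lemma typ_add_mk_ne_P_of_Q {ι κ : Type} {f : ι → G3} {g : κ → G3}
    (hA : typ (mk ι f) = Q)
    (ih : ∀ i j, typ (f i) = Q → typ (g j) = Q → typ (add (f i) (g j)) ≠ N) :
    typ (add (mk ι f) (mk κ g)) ≠ P := by
  intro hP
  obtain ⟨hfB, hAg⟩ := typ_add_mk_eq_P_iff.mp hP
  have hf_ne_P : ∀ i, typ (f i) ≠ P := fun i hi => by
    simpa [hA] using typ_mk_eq_N_iff.mpr ⟨i, hi⟩
  obtain ⟨i, hi⟩ : ∃ i, typ (f i) ≠ O := by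
    by_contra! h
    simpa [hA] using typ_mk_eq_P_iff.mpr h
  have hg : ∀ j, typ (g j) = O ∨ typ (g j) = Q := fun j => by
    have hO : typ (add (g j) (mk ι f)) = O := typ_add_comm .. ▸ hAg j
    cases hgj : typ (g j)
    case N => simpa [hA] using (addRules _ _).N_of_N_of_add_O hgj hO
    case P => simpa [hA] using (addRules _ _).O_of_P_of_add_O hgj hO
    all_goals simp
  cases hfi : typ (f i)
  · obtain ⟨j, hj⟩ := typ_mk_eq_N_iff.mp ((addRules _ _).N_of_N_of_add_O hfi (hfB i))
    simpa [hj] using hg j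
  · exact hi hfi
  · exact hf_ne_P i hfi
  · by_cases hgO : ∀ j, typ (g j) = O
    · exact hi ((addRules _ _).O_of_P_of_add_O (typ_mk_eq_P_iff.mpr hgO) (typ_add_comm .. ▸ hfB i))
    · obtain ⟨j, hj⟩ := not_forall.mp hgO
      exact ih i j hfi ((hg j).resolve_left hj) (typ_add_eq_N_of_typ_add_mk_eq_O (hfB i) j)

theorem typ_add_ne_of_Q (A B : G3) :
    (typ A = Q ∨ typ B = Q → typ (add A B) ≠ P) ∧
      (typ A = Q → typ B = Q → typ (add A B) ≠ N) := by
  induction A generalizing B with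
  | mk ι f ihA =>
    induction B with
    | mk κ g ihB =>
      refine ⟨?_, fun hA hB hN => ?_⟩
      · rintro (hA | hB)
        · exact typ_add_mk_ne_P_of_Q hA fun i j => (ihA i (g j)).2
        · rw [typ_add_comm]
          exact typ_add_mk_ne_P_of_Q hB fun j i hj hi =>
            typ_add_comm (f i) (g j) ▸ (ihA i (g j)).2 hi hj
      · rcases typ_add_mk_eq_N_iff.mp hN with ⟨i, hi⟩ | ⟨j, hj⟩
        · exact (ihA i _).1 (.inr hB) hi
        · exact (ihB j).1 (.inl hA) hj

theorem no_Q_plus_Q_eq_N_or_P :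
    ¬ ∃ X Y : G3, typ X = PType.Q ∧ typ Y = PType.Q ∧
      (typ (add X Y) = PType.N ∨ typ (add X Y) = PType.P) := by
  rintro ⟨X, Y, hX, hY, hN | hP⟩
  · exact (typ_add_ne_of_Q X Y).2 hX hY hN
  · exact (typ_add_ne_of_Q X Y).1 (.inl hX) hP

end G3
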